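/- Let a > 0, b ≠ 0, R > 0, 0 < r_{i-1} < r_i < R, α = b/a. The function φ(r) = [ (R/r_{i-1} - 1)^{α/R} - (R/r - 1)^{α/R} ] / [ (R/r_{i-1} - 1)^{α/R} - (R/r_i - 1)^{α/R} ] satisfies the differential equation (a·r·(R-r)·φ'(r) + b·φ(r))' = 0 on (r_{i-1}, r_i). -/
import Mathlib


open Real

theorem stmt_14 (a b R rm ri : ℝ) (ha : 0 < a) (hb : b ≠ 0) (hR : 0 < R)
    (h0 : 0 < rm) (h1 : rm < ri) (h2 : ri < R)
    (α : ℝ) (hα : α = b / a)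
    (hden : (R / rm - 1) ^ (α / R) - (R / ri - 1) ^ (α / R) ≠ 0)
    (φ : ℝ → ℝ)
    (hφ : ∀ r ∈ Set.Ioo rm ri, φ r =
      ((R / rm - 1) ^ (α / R) - (R / r - 1) ^ (α / R)) /
      ((R / rm - 1) ^ (α / R) - (R / ri - 1) ^ (α / R))) :
    ∀ r ∈ Set.Ioo rm ri,
      HasDerivAt (fun s => a * s * (R - s) * deriv φ s + b * φ s) 0 r := by
  intro r hr
  set C := (R / rm - 1) ^ (α / R) with hC
  set D := (R / rm - 1) ^ (α / R) - (R / ri - 1) ^ (α / R) with hD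
  have hO : IsOpen (Set.Ioo rm ri) := isOpen_Ioo
  have ha' : a ≠ 0 := ne_of_gt ha
  have hR' : R ≠ 0 := ne_of_gt hR
  have key : ∀ s ∈ Set.Ioo rm ri,
      a * s * (R - s) * deriv φ s + b * φ s = b * C / D := by
    intro s hs
    have hs0 : 0 < s := lt_trans h0 hs.1
    have hsR : s < R := lt_trans hs.2 h2
    have hs0' : s ≠ 0 := ne_of_gt hs0
    have hpos : 0 < R / s - 1 := by
      rw [sub_pos, lt_div_iff₀ hs0]; linarith
    -- derivative of inner function
    have hh : HasDerivAt (fun t : ℝ => R / t - 1) (R * (-(s ^ 2)⁻¹)) s := by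
      have h1' : HasDerivAt (fun t : ℝ => t⁻¹) (-(s ^ 2)⁻¹) s := hasDerivAt_inv hs0'
      have h2' := (h1'.const_mul R).sub_const 1
      simpa [div_eq_mul_inv] using h2'
    have hg : HasDerivAt (fun t : ℝ => (R / t - 1) ^ (α / R))
        (α / R * (R / s - 1) ^ (α / R - 1) * (R * (-(s ^ 2)⁻¹))) s := by
      have := hh.rpow_const (p := α / R) (Or.inl (ne_of_gt hpos))
      convert this using 1
      ring
    have hφd : HasDerivAt φ
        ((0 - α / R * (R / s - 1) ^ (α / R - 1) * (R * (-(s ^ 2)⁻¹))) / D) s := by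
      have hform : HasDerivAt (fun t : ℝ => (C - (R / t - 1) ^ (α / R)) / D)
          ((0 - α / R * (R / s - 1) ^ (α / R - 1) * (R * (-(s ^ 2)⁻¹))) / D) s :=
        ((hasDerivAt_const s C).sub hg).div_const D
      refine hform.congr_of_eventuallyEq ?_
      filter_upwards [hO.mem_nhds hs] with t ht
      rw [hφ t ht]
    have hderiv : deriv φ s =
        (0 - α / R * (R / s - 1) ^ (α / R - 1) * (R * (-(s ^ 2)⁻¹))) / D := hφd.deriv
    have hφs : φ s = (C - (R / s - 1) ^ (α / R)) / D := hφ s hs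
    have hGE : (R / s - 1) ^ (α / R) = (R / s - 1) * (R / s - 1) ^ (α / R - 1) := by
      have h := Real.rpow_add hpos 1 (α / R - 1)
      rw [Real.rpow_one] at h
      rw [show (1 : ℝ) + (α / R - 1) = α / R by ring] at h
      exact h
    rw [hderiv, hφs, hGE]
    subst hα
    field_simp
    ring
  have hev : (fun s => a * s * (R - s) * deriv φ s + b * φ s) =ᶠ[nhds r]
      fun _ => b * C / D := by
    filter_upwards [hO.mem_nhds hr] with s hs using key s hs
  exact (hasDerivAt_const r (b * C / D)).congr_of_eventuallyEq hev
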